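/- arXiv:2605.11545 — 8 statements merged into one kernel-verified Lean document; each statement's English description precedes it below -/
import Mathlib

section
/- Let σ be any function from the set of nonconstant squarefree monomials of degree at most d in variables x_0,…,x_n to F_2, extended to a linear functional on the space of multilinear polynomials of degree at most d by setting σ(1)=1 and extending F_2-linearly. Then there exists a subset β ⊆ F_2^{n+1} such that σ(q) = Σ_{a∈β} q(a) for every multilinear polynomial q of degree at most d. -/
open Finset

/-- A monomial assignment σ on nonconstant squarefree monomials of
degree ≤ d in variables x_0,…,x_n over F₂, extended linearly with σ(1)=1,
is given by summation of evaluations over some subset β of F₂^{n+1}.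
A multilinear polynomial of degree ≤ d is encoded by its coefficient function
`c : Finset (Fin (n+1)) → ZMod 2` supported on sets of size ≤ d. -/
theorem stmt0 (n d : ℕ) (σ : Finset (Fin (n + 1)) → ZMod 2) (hσ1 : σ ∅ = 1) :
    ∃ β : Finset (Fin (n + 1) → ZMod 2),
      ∀ c : Finset (Fin (n + 1)) → ZMod 2,
        (∀ S, c S ≠ 0 → S.card ≤ d) →
        ∑ S : Finset (Fin (n + 1)), c S * σ S
          = ∑ a ∈ β, ∑ S : Finset (Fin (n + 1)), c S * ∏ i ∈ S, a i := by
  classical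
  set lam : Finset (Fin (n + 1)) → ZMod 2 :=
    fun T => ∑ R ∈ univ.filter (T ⊆ ·), σ R with hlam
  set ind : Finset (Fin (n + 1)) → (Fin (n + 1) → ZMod 2) :=
    fun T i => if i ∈ T then 1 else 0 with hind
  have hinj : Function.Injective ind := by
    intro T U h
    ext i
    have := congrFun h i
    simp only [hind] at this
    by_cases hT : i ∈ T <;> by_cases hU : i ∈ U <;> simp [hT, hU] at this ⊢
  have hzmod : ∀ x : ZMod 2, x = 0 ∨ x = 1 := by decide
  refine ⟨(univ.filter (fun T => lam T = 1)).image ind, ?_⟩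
  intro c _
  have key : ∀ S : Finset (Fin (n + 1)),
      σ S = ∑ a ∈ (univ.filter (fun T => lam T = 1)).image ind, ∏ i ∈ S, a i := by
    intro S
    rw [Finset.sum_image (fun a _ b _ h => hinj h)]
    have hprod : ∀ T : Finset (Fin (n + 1)),
        (∏ i ∈ S, ind T i) = if S ⊆ T then 1 else 0 := by
      intro T
      by_cases h : S ⊆ T
      · simp only [h, if_true]
        exact Finset.prod_eq_one fun i hi => by simp [hind, h hi]
      · simp only [h, if_false]
        obtain ⟨i, hi, hiT⟩ := not_subset.mp h
        exact Finset.prod_eq_zero hi (by simp [hind, hiT])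
    have hcount : ∀ R : Finset (Fin (n + 1)),
        (∑ T : Finset (Fin (n + 1)), if S ⊆ T ∧ T ⊆ R then σ R else 0)
          = if R = S then σ R else 0 := by
      intro R
      have hIcc : univ.filter (fun T => S ⊆ T ∧ T ⊆ R) = Finset.Icc S R := by
        ext T; simp [Finset.mem_Icc]
      rw [← Finset.sum_filter, hIcc, Finset.sum_const]
      by_cases hRS : R = S
      · subst hRS; simp
      · simp only [hRS, if_false]
        by_cases hSR : S ⊆ R
        · rw [Finset.card_Icc_finset hSR]
          have hlt : S.card < R.card :=
            Finset.card_lt_card (lt_of_le_of_ne hSR (fun h => hRS h.symm))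
          obtain ⟨k, hk⟩ : ∃ k, R.card - S.card = k + 1 :=
            ⟨R.card - S.card - 1, by omega⟩
          rw [hk, pow_succ, mul_smul]
          simp [two_nsmul, CharTwo.add_self_eq_zero]
          exact Or.inr (Or.inl (by decide))
        · rw [Finset.Icc_eq_empty (fun h => hSR h)]
          simp
    calc σ S = ∑ T ∈ univ.filter (S ⊆ ·), lam T := by
          have step : ∀ T, lam T = ∑ R : Finset (Fin (n + 1)), if T ⊆ R then σ R else 0 :=
            fun T => by rw [hlam]; exact Finset.sum_filter _ _
          simp only [step]
          rw [Finset.sum_comm]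
          rw [Finset.sum_congr rfl (fun R (_ : R ∈ univ) => Finset.sum_filter (S ⊆ ·) _)]
          have : ∀ R T : Finset (Fin (n + 1)),
              (if S ⊆ T then if T ⊆ R then σ R else 0 else 0)
                = if S ⊆ T ∧ T ⊆ R then σ R else 0 := by
            intro R T
            by_cases h1 : S ⊆ T <;> by_cases h2 : T ⊆ R <;> simp [h1, h2]
          simp only [this]
          rw [Finset.sum_congr rfl (fun R _ => hcount R)]
          simp
      _ = ∑ T ∈ univ.filter (fun T => lam T = 1), if S ⊆ T then 1 else 0 := by
          rw [Finset.sum_filter, Finset.sum_filter]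
          refine Finset.sum_congr rfl fun T _ => ?_
          rcases hzmod (lam T) with h | h <;> by_cases hST : S ⊆ T <;>
            simp [h, hST]
      _ = ∑ T ∈ univ.filter (fun T => lam T = 1), ∏ i ∈ S, ind T i :=
          Finset.sum_congr rfl fun T _ => (hprod T).symm
  rw [Finset.sum_comm]
  refine Finset.sum_congr rfl fun S _ => ?_
  rw [← Finset.mul_sum, ← key S]
end

section
/- Let ρ ≥ 0 be an integer, let T ⊆ F_2^m be a finite set with |T| < 2^ρ, and let a ∈ T. Then there exists a multilinear polynomial q over F_2 in m variables of degree at most ρ such that q(a) = 1 and q(b) = 0 for all b ∈ T \ {a}. -/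
open Finset

variable {m : ℕ}

def Ev (c : Finset (Fin m) → ZMod 2) (x : Fin m → ZMod 2) : ZMod 2 :=
  ∑ S : Finset (Fin m), c S * ∏ i ∈ S, x i

lemma zmod2_cases (x : ZMod 2) : x = 0 ∨ x = 1 := by revert x; decide

lemma zmod2_add_self (x : ZMod 2) : x + x = 0 := by revert x; decide

lemma zmod2_mul_self (x : ZMod 2) : x * x = x := by revert x; decide

lemma Ev_mulVar (c : Finset (Fin m) → ZMod 2) (j : Fin m) (x : Fin m → ZMod 2) :
    Ev (fun S => if j ∈ S then c S + c (S.erase j) else 0) x = Ev c x * x j := by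
  unfold Ev
  rw [Finset.sum_mul]
  have key : ∀ S : Finset (Fin m), (c S * ∏ i ∈ S, x i) * x j = c S * ∏ i ∈ insert j S, x i := by
    intro S
    by_cases h : j ∈ S
    · rw [Finset.insert_eq_self.mpr h, mul_assoc]
      congr 1
      rw [← Finset.mul_prod_erase S x h]
      rw [mul_comm (x j), mul_assoc, zmod2_mul_self, mul_comm]
    · rw [Finset.prod_insert h, mul_assoc, mul_comm (∏ i ∈ S, x i)]
  simp_rw [key]
  rw [← Finset.sum_filter_add_sum_filter_not Finset.univ (fun S => j ∈ S)
    (fun S => c S * ∏ i ∈ insert j S, x i)]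
  have h1 : ∑ S ∈ Finset.univ.filter (fun S => j ∈ S), c S * ∏ i ∈ insert j S, x i
      = ∑ S ∈ Finset.univ.filter (fun S => j ∈ S), c S * ∏ i ∈ S, x i := by
    apply Finset.sum_congr rfl
    intro S hS
    rw [Finset.insert_eq_self.mpr (Finset.mem_filter.mp hS).2]
  have h2 : ∑ S ∈ Finset.univ.filter (fun S => ¬ j ∈ S), c S * ∏ i ∈ insert j S, x i
      = ∑ S ∈ Finset.univ.filter (fun S => j ∈ S), c (S.erase j) * ∏ i ∈ S, x i := by
    refine Finset.sum_bij' (fun S _ => insert j S) (fun S _ => S.erase j) ?_ ?_ ?_ ?_ ?_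
    · intro S hS
      simp only [Finset.mem_filter, Finset.mem_univ, true_and] at hS ⊢
      exact Finset.mem_insert_self j S
    · intro S hS
      simp only [Finset.mem_filter, Finset.mem_univ, true_and] at hS ⊢
      exact Finset.notMem_erase j S
    · intro S hS
      simp only [Finset.mem_filter, Finset.mem_univ, true_and] at hS
      exact Finset.erase_insert hS
    · intro S hS
      simp only [Finset.mem_filter, Finset.mem_univ, true_and] at hS
      exact Finset.insert_erase hS
    · intro S hS
      simp only [Finset.mem_filter, Finset.mem_univ, true_and] at hS
      rw [Finset.erase_insert hS]
  rw [h1, h2, ← Finset.sum_add_distrib, Finset.sum_filter]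
  apply Finset.sum_congr rfl
  intro S _
  by_cases h : j ∈ S <;> simp [h, add_mul]

def affC (w0 : ZMod 2) (v : Fin m → ZMod 2) (c : Finset (Fin m) → ZMod 2) :
    Finset (Fin m) → ZMod 2 :=
  fun S => w0 * c S + ∑ j, v j * (if j ∈ S then c S + c (S.erase j) else 0)

lemma Ev_affC (w0 : ZMod 2) (v : Fin m → ZMod 2) (c : Finset (Fin m) → ZMod 2)
    (x : Fin m → ZMod 2) :
    Ev (affC w0 v c) x = (w0 + ∑ j, v j * x j) * Ev c x := by
  have h : ∀ j, Ev (fun S => if j ∈ S then c S + c (S.erase j) else 0) x = Ev c x * x j :=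
    fun j => Ev_mulVar c j x
  unfold Ev affC
  rw [add_mul, Finset.sum_mul]
  simp_rw [add_mul, Finset.sum_add_distrib, Finset.sum_mul]
  congr 1
  · rw [Finset.mul_sum]; apply Finset.sum_congr rfl; intro S _; ring
  · rw [Finset.sum_comm]
    apply Finset.sum_congr rfl
    intro j _
    have := h j
    unfold Ev at this
    calc ∑ S : Finset (Fin m), v j * (if j ∈ S then c S + c (S.erase j) else 0) * ∏ i ∈ S, x i
        = v j * ∑ S : Finset (Fin m), (if j ∈ S then c S + c (S.erase j) else 0) * ∏ i ∈ S, x i := by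
          rw [Finset.mul_sum]; apply Finset.sum_congr rfl; intro S _; ring
      _ = v j * ((∑ S : Finset (Fin m), c S * ∏ i ∈ S, x i) * x j) := by rw [this]
      _ = v j * x j * ∑ S : Finset (Fin m), c S * ∏ i ∈ S, x i := by ring

lemma affC_deg (w0 : ZMod 2) (v : Fin m → ZMod 2) (c : Finset (Fin m) → ZMod 2) (d : ℕ)
    (hd : ∀ S, c S ≠ 0 → S.card ≤ d) :
    ∀ S, affC w0 v c S ≠ 0 → S.card ≤ d + 1 := by
  intro S hS
  by_contra hcard
  push_neg at hcard
  apply hS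
  have hcS : c S = 0 := by
    by_contra h; exact absurd (hd S h) (by omega)
  unfold affC
  rw [hcS, mul_zero, zero_add]
  apply Finset.sum_eq_zero
  intro j _
  by_cases hj : j ∈ S
  · have h0 : c (S.erase j) = 0 := by
      by_contra h
      have := hd _ h
      rw [Finset.card_erase_of_mem hj] at this
      omega
    simp [hj, h0]
  · simp [hj]

lemma halves (u : Fin m → ZMod 2) (hu : u ≠ 0) :
    2 * (Finset.univ.filter (fun v : Fin m → ZMod 2 => ∑ i, v i * u i = 0)).card
      = Fintype.card (Fin m → ZMod 2) := by
  obtain ⟨j, hj⟩ : ∃ j, u j ≠ 0 := by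
    by_contra h
    push_neg at h
    exact hu (funext h)
  have hj1 : u j = 1 := (zmod2_cases (u j)).resolve_left hj
  set e : Fin m → ZMod 2 := fun k => if k = j then 1 else 0 with he
  have hphi : ∀ v : Fin m → ZMod 2, ∑ i, (v + e) i * u i = (∑ i, v i * u i) + 1 := by
    intro v
    have : ∀ i, (v + e) i * u i = v i * u i + e i * u i := by
      intro i; simp [add_mul]
    simp_rw [this]
    rw [Finset.sum_add_distrib]
    congr 1
    rw [he]
    simp only []
    rw [Finset.sum_eq_single j]
    · simp [hj1]
    · intro i _ hij; simp [hij]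
    · intro h; exact absurd (Finset.mem_univ j) h
  have hcards : (Finset.univ.filter (fun v : Fin m → ZMod 2 => ∑ i, v i * u i = 0)).card
      = (Finset.univ.filter (fun v : Fin m → ZMod 2 => ¬ (∑ i, v i * u i = 0))).card := by
    refine Finset.card_bij' (fun v _ => v + e) (fun v _ => v + e) ?_ ?_ ?_ ?_
    · intro v hv
      simp only [Finset.mem_filter, Finset.mem_univ, true_and] at hv ⊢
      rw [hphi, hv]
      decide
    · intro v hv
      simp only [Finset.mem_filter, Finset.mem_univ, true_and] at hv ⊢
      rw [hphi]
      rcases zmod2_cases (∑ i, v i * u i) with h | h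
      · exact absurd h hv
      · rw [h]; decide
    · intro v _
      funext k
      simp [zmod2_add_self, add_assoc]
    · intro v _
      funext k
      simp [zmod2_add_self, add_assoc]
  have hsplit : (Finset.univ.filter (fun v : Fin m → ZMod 2 => ∑ i, v i * u i = 0)).card
      + (Finset.univ.filter (fun v : Fin m → ZMod 2 => ¬ (∑ i, v i * u i = 0))).card
      = Fintype.card (Fin m → ZMod 2) := by
    rw [Finset.card_filter_add_card_filter_not
      (p := fun v : Fin m → ZMod 2 => ∑ i, v i * u i = 0), Finset.card_univ]
  rw [two_mul, ← hsplit, hcards]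

lemma good_v (T : Finset (Fin m → ZMod 2)) (a : Fin m → ZMod 2) (ha : a ∈ T)
    (h2 : 2 ≤ T.card) :
    ∃ v : Fin m → ZMod 2,
      2 * ((T.erase a).filter (fun t => ∑ i, v i * (t i + a i) = 0)).card + 2 ≤ T.card := by
  by_contra hcon
  push_neg at hcon
  set N := Fintype.card (Fin m → ZMod 2) with hN
  have herase : (T.erase a).card = T.card - 1 := Finset.card_erase_of_mem ha
  have key : ∀ t ∈ T.erase a,
      2 * (Finset.univ.filter (fun v : Fin m → ZMod 2 => ∑ i, v i * (t i + a i) = 0)).card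
        = N := by
    intro t ht
    apply halves
    intro h0
    have hta : t ≠ a := (Finset.mem_erase.mp ht).1
    apply hta
    funext i
    have : t i + a i = 0 := congrFun h0 i
    rcases zmod2_cases (t i) with h | h <;> rcases zmod2_cases (a i) with h' | h' <;>
      simp [h, h'] at this ⊢
  have hsum : ∑ v : Fin m → ZMod 2,
      2 * ((T.erase a).filter (fun t => ∑ i, v i * (t i + a i) = 0)).card
      = (T.card - 1) * N := by
    calc ∑ v : Fin m → ZMod 2,
        2 * ((T.erase a).filter (fun t => ∑ i, v i * (t i + a i) = 0)).card
        = ∑ v : Fin m → ZMod 2, ∑ t ∈ T.erase a,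
            (if ∑ i, v i * (t i + a i) = 0 then 2 else 0) := by
          apply Finset.sum_congr rfl
          intro v _
          rw [Finset.card_filter, Finset.mul_sum]
          apply Finset.sum_congr rfl
          intro t _
          by_cases h : ∑ i, v i * (t i + a i) = 0 <;> simp [h]
      _ = ∑ t ∈ T.erase a, ∑ v : Fin m → ZMod 2,
            (if ∑ i, v i * (t i + a i) = 0 then 2 else 0) := Finset.sum_comm
      _ = ∑ t ∈ T.erase a,
            2 * (Finset.univ.filter
              (fun v : Fin m → ZMod 2 => ∑ i, v i * (t i + a i) = 0)).card := by
          apply Finset.sum_congr rfl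
          intro t _
          rw [Finset.card_filter, Finset.mul_sum]
          apply Finset.sum_congr rfl
          intro v _
          by_cases h : ∑ i, v i * (t i + a i) = 0 <;> simp [h]
      _ = ∑ t ∈ T.erase a, N := Finset.sum_congr rfl key
      _ = (T.card - 1) * N := by rw [Finset.sum_const, herase, smul_eq_mul]
  have hlt : ∑ _v : Fin m → ZMod 2, T.card
      < ∑ v : Fin m → ZMod 2,
          (2 * ((T.erase a).filter (fun t => ∑ i, v i * (t i + a i) = 0)).card + 1) := by
    apply Finset.sum_lt_sum
    · intro v _
      have h := hcon v
      generalize ((T.erase a).filter (fun t => ∑ i, v i * (t i + a i) = 0)).card = k at h ⊢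
      clear * - h
      omega
    · refine ⟨0, Finset.mem_univ 0, ?_⟩
      have hfil : (T.erase a).filter
          (fun t => ∑ i, (0 : Fin m → ZMod 2) i * (t i + a i) = 0) = T.erase a := by
        apply Finset.filter_true_of_mem
        intro t _
        simp
      rw [hfil, herase]
      clear * - h2
      omega
  rw [Finset.sum_const, Finset.card_univ, ← hN, smul_eq_mul, Finset.sum_add_distrib,
    Finset.sum_const, Finset.card_univ, ← hN, smul_eq_mul, mul_one, hsum] at hlt
  have : (T.card - 1) * N + N = T.card * N := by
    have : T.card - 1 + 1 = T.card := by clear * - h2; omega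
    calc (T.card - 1) * N + N = (T.card - 1 + 1) * N := by ring
      _ = T.card * N := by rw [this]
  rw [this, mul_comm] at hlt
  exact lt_irrefl _ hlt

/-- Point isolator: for T ⊆ F₂^m with |T| < 2^ρ and a ∈ T there is
a multilinear polynomial of degree at most ρ (given by coefficients on
squarefree monomials) which is 1 at a and 0 on T \ {a}. -/
theorem stmt2 (m ρ : ℕ) (T : Finset (Fin m → ZMod 2)) (hT : T.card < 2 ^ ρ)
    (a : Fin m → ZMod 2) (ha : a ∈ T) :
    ∃ c : Finset (Fin m) → ZMod 2,
      (∀ S, c S ≠ 0 → S.card ≤ ρ) ∧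
      (∑ S : Finset (Fin m), c S * ∏ i ∈ S, a i) = 1 ∧
      ∀ b ∈ T, b ≠ a → (∑ S : Finset (Fin m), c S * ∏ i ∈ S, b i) = 0 := by
  induction ρ generalizing T with
  | zero =>
    have := Finset.card_pos.mpr ⟨a, ha⟩
    rw [pow_zero] at hT
    omega
  | succ ρ ih =>
    by_cases hall : ∀ b ∈ T, b = a
    · refine ⟨fun S => if S = ∅ then 1 else 0, ?_, ?_, ?_⟩
      · intro S hS
        by_cases h : S = ∅
        · simp [h]
        · simp [h] at hS
      · rw [Finset.sum_eq_single ∅]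
        · simp
        · intro S _ hS; simp [hS]
        · intro h; exact absurd (Finset.mem_univ ∅) h
      · intro b hb hba; exact absurd (hall b hb) hba
    · push_neg at hall
      obtain ⟨b, hb, hba⟩ := hall
      have h2 : 2 ≤ T.card := Finset.one_lt_card.mpr ⟨a, ha, b, hb, fun h => hba h.symm⟩
      obtain ⟨v, hv⟩ := good_v T a ha h2
      set T' := insert a ((T.erase a).filter (fun t => ∑ i, v i * (t i + a i) = 0)) with hT'
      have hT'card : T'.card < 2 ^ ρ := by
        have h1 : T'.card
            ≤ ((T.erase a).filter (fun t => ∑ i, v i * (t i + a i) = 0)).card + 1 :=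
          Finset.card_insert_le _ _
        have hp : (2:ℕ)^(ρ+1) = 2^ρ * 2 := pow_succ 2 ρ
        generalize hk : ((T.erase a).filter (fun t => ∑ i, v i * (t i + a i) = 0)).card = k
          at h1 hv
        rw [hp] at hT
        generalize (2:ℕ)^ρ = P at *
        clear * - h1 hv hT
        omega
      obtain ⟨c', hdeg, hca, hc0⟩ := ih T' hT'card (Finset.mem_insert_self a _)
      refine ⟨affC (1 + ∑ j, v j * a j) v c', affC_deg _ _ _ ρ hdeg, ?_, ?_⟩
      · show Ev (affC (1 + ∑ j, v j * a j) v c') a = 1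
        rw [Ev_affC]
        have hw : ((1 + ∑ j, v j * a j) + ∑ j, v j * a j) = 1 := by
          rw [add_assoc, zmod2_add_self, add_zero]
        rw [hw, one_mul]
        exact hca
      · intro b' hb' hba'
        show Ev (affC (1 + ∑ j, v j * a j) v c') b' = 0
        rw [Ev_affC]
        rcases zmod2_cases (∑ i, v i * (b' i + a i)) with h | h
        · have hmem : b' ∈ T' := by
            rw [hT']
            exact Finset.mem_insert_of_mem
              (Finset.mem_filter.mpr ⟨Finset.mem_erase.mpr ⟨hba', hb'⟩, h⟩)
          have : Ev c' b' = 0 := hc0 b' hmem hba'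
          rw [this, mul_zero]
        · have hexp : ∑ i, v i * (b' i + a i) = (∑ j, v j * b' j) + ∑ j, v j * a j := by
            simp_rw [mul_add]
            rw [Finset.sum_add_distrib]
          rw [hexp] at h
          have hfac : ((1 + ∑ j, v j * a j) + ∑ j, v j * b' j) = 0 := by
            calc (1 + ∑ j, v j * a j) + ∑ j, v j * b' j
                = 1 + ((∑ j, v j * b' j) + ∑ j, v j * a j) := by ring
              _ = 1 + 1 := by rw [h]
              _ = 0 := by decide
          rw [hfac, zero_mul]
end

section
/- Let A be a symmetric matrix over F_2 with A_{ii} = 1 for some index i, and let a_i denote its i-th column. Then the matrix B := A + a_i a_iᵀ satisfies rank(B) = rank(A) − 1, and the i-th row and i-th column of B are zero. -/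
/-!
Let `B = A - c rᵀ`, where `c` and `r` are the column and the row of `A` through an entry
`A i j = 1` (one step of Wedderburn's rank-one reduction); `B` vanishes on row `i` and column `j`.
Since `A x = B x + (A x)ᵢ c`, the column space of `A` is `range B ⊔ ⟨c⟩`; every vector of
`range B` vanishes at `i` while `cᵢ = 1`, so the sum is direct and the rank drops by one.
Over `𝔽₂`, for symmetric `A`, row and column `i` agree and `A - a aᵀ = A + a aᵀ`.
-/

open Matrix

namespace Matrix

variable {m n : Type*}

section Ring

variable {R : Type*} [Ring R] (A : Matrix m n R) {i : m} {j : n}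

theorem sub_vecMulVec_col_row_apply_row (hij : A i j = 1) (k : n) :
    (A - vecMulVec (A.col j) (A.row i)) i k = 0 := by
  simp [vecMulVec_apply, hij]

theorem sub_vecMulVec_col_row_apply_col (hij : A i j = 1) (l : m) :
    (A - vecMulVec (A.col j) (A.row i)) l j = 0 := by
  simp [vecMulVec_apply, hij]

end Ring

theorem mulVec_eq_sub_vecMulVec_col_row_mulVec_add {R : Type*} [CommRing R] [Fintype n]
    (A : Matrix m n R) (i : m) (j : n) (x : n → R) :
    A *ᵥ x = (A - vecMulVec (A.col j) (A.row i)) *ᵥ x + (A *ᵥ x) i • A.col j := by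
  rw [sub_mulVec, vecMulVec_mulVec, op_smul_eq_smul]
  exact (sub_add_cancel _ _).symm

variable {K : Type*} [Field K] [Fintype n] (A : Matrix m n K) {i : m} {j : n}

theorem range_mulVecLin_eq_sup_span_col (i : m) (j : n) :
    LinearMap.range A.mulVecLin =
      LinearMap.range (A - vecMulVec (A.col j) (A.row i)).mulVecLin ⊔ K ∙ A.col j := by
  have hcol : A.col j ∈ LinearMap.range A.mulVecLin := by
    rw [range_mulVecLin]
    exact Submodule.subset_span ⟨j, rfl⟩
  have hmulVec := mulVec_eq_sub_vecMulVec_col_row_mulVec_add A i j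
  apply le_antisymm
  · rintro v ⟨x, rfl⟩
    rw [mulVecLin_apply, hmulVec x]
    exact Submodule.add_mem_sup ⟨x, rfl⟩
      (Submodule.smul_mem _ _ (Submodule.mem_span_singleton_self _))
  · refine sup_le ?_ ((Submodule.span_singleton_le_iff_mem _ _).mpr hcol)
    rintro v ⟨x, rfl⟩
    rw [mulVecLin_apply, eq_sub_of_add_eq (hmulVec x).symm]
    exact Submodule.sub_mem _ ⟨x, rfl⟩ (Submodule.smul_mem _ _ hcol)

theorem rank_sub_vecMulVec_col_row_add_one [Fintype m] (hij : A i j = 1) :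
    (A - vecMulVec (A.col j) (A.row i)).rank + 1 = A.rank := by
  set B := A - vecMulVec (A.col j) (A.row i)
  have hdisj : LinearMap.range B.mulVecLin ⊓ (K ∙ A.col j) = ⊥ := by
    rw [eq_bot_iff]
    rintro v ⟨⟨x, rfl⟩, hv⟩
    obtain ⟨c, hc⟩ := Submodule.mem_span_singleton.mp hv
    have hrow : B.mulVecLin x i = 0 := by
      have hBi : ∀ k, B i k = 0 := sub_vecMulVec_col_row_apply_row A hij
      simp [mulVec, dotProduct, hBi]
    rw [← hc] at hrow
    have hc0 : c = 0 := by simpa [hij] using hrow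
    simp [← hc, hc0]
  have hspan : Module.finrank K (K ∙ A.col j) = 1 :=
    finrank_span_singleton fun h => by simpa [hij] using congrFun h i
  have hdim := Submodule.finrank_sup_add_finrank_inf_eq (LinearMap.range B.mulVecLin) (K ∙ A.col j)
  rw [hdisj, ← range_mulVecLin_eq_sup_span_col, finrank_bot, hspan, add_zero] at hdim
  exact hdim.symm

end Matrix

/-- If A is symmetric over F₂ with A i i = 1, and aᵢ is the i-th
column of A, then B = A + aᵢ aᵢᵀ has rank(A) − 1 and zero i-th row and column. -/
theorem stmt5 (N : ℕ) (A : Matrix (Fin N) (Fin N) (ZMod 2)) (hsymm : A.IsSymm)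
    (i : Fin N) (hii : A i i = 1) :
    (A + Matrix.vecMulVec (fun j => A j i) (fun j => A j i)).rank + 1 = A.rank ∧
    (∀ j, (A + Matrix.vecMulVec (fun j => A j i) (fun j => A j i)) i j = 0) ∧
    (∀ j, (A + Matrix.vecMulVec (fun j => A j i) (fun j => A j i)) j i = 0) := by
  have hB : A + vecMulVec (fun j => A j i) (fun j => A j i) =
      A - vecMulVec (A.col i) (A.row i) := by
    ext k l
    simp [vecMulVec_apply, CharTwo.sub_eq_add, hsymm.apply i l]
  rw [hB]
  exact ⟨A.rank_sub_vecMulVec_col_row_add_one hii, A.sub_vecMulVec_col_row_apply_row hii,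
    A.sub_vecMulVec_col_row_apply_col hii⟩
end

section
/- Let K = F_{2^r} and let L be an F_2-linear subspace of N×N matrices over F_2. If A is a nonzero matrix in the K-span of L (inside K^{N×N}) with rank over K at most k, then there exists a nonzero matrix B ∈ L with rank over F_2 at most r·k. -/
/-!
Choose an `F₂`-linear functional `φ : K → F₂` that does not vanish on some entry of `A`, and
let `B` be `φ` applied entrywise to `A`. Since `φ (c • M) = φ c • M` for matrices `M` over `F₂`,
`B` lies in `L`. The columns of `B` are images under `φ` of columns of `A`, so they lie in the
image of the `K`-column space of `A`, whose `F₂`-dimension is `r · rank A`.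
-/

namespace Matrix

variable {m n F K : Type*} [Field F] [Field K] [Algebra F K]

theorem rank_map_le_finrank_mul_rank [FiniteDimensional F K] [Finite m] [Fintype n]
    (A : Matrix m n K) (φ : Module.Dual F K) :
    (A.map φ).rank ≤ Module.finrank F K * A.rank := by
  set V := Submodule.span K (Set.range Aᵀ)
  have hcols : Set.range (A.map φ)ᵀ = φ.compLeft m '' Set.range Aᵀ :=
    (Set.range_comp (φ.compLeft m) fun j => Aᵀ j)
  calc (A.map φ).rank
      = Module.finrank F ((Submodule.span F (Set.range Aᵀ)).map (φ.compLeft m)) := by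
        rw [rank_eq_finrank_span_cols, col, hcols, Submodule.span_image]
    _ ≤ Module.finrank F ((V.restrictScalars F).map (φ.compLeft m)) :=
        Submodule.finrank_mono (Submodule.map_mono (Submodule.span_le_restrictScalars F K _))
    _ ≤ Module.finrank F (V.restrictScalars F) := Submodule.finrank_map_le _ _
    _ = Module.finrank F K * A.rank := by
        rw [rank_eq_finrank_span_cols]
        exact (Module.finrank_mul_finrank F K V).symm

theorem mapMatrix_smul_map_algebraMap (φ : Module.Dual F K) (c : K) (M : Matrix m n F) :
    φ.mapMatrix (c • M.map (algebraMap F K)) = φ c • M := by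
  ext i j
  simp only [LinearMap.mapMatrix_apply, map_apply, smul_apply, smul_eq_mul]
  rw [← Algebra.commutes, ← Algebra.smul_def, map_smul, smul_eq_mul, mul_comm]

theorem map_dual_mem_of_mem_span_map_algebraMap
    (L : Submodule F (Matrix m n F)) {A : Matrix m n K}
    (hA : A ∈ Submodule.span K ((fun M : Matrix m n F => M.map (algebraMap F K)) '' L))
    (φ : Module.Dual F K) : A.map φ ∈ L := by
  suffices ∀ c : K, φ.mapMatrix (c • A) ∈ L by simpa using this 1
  induction hA using Submodule.span_induction with
  | mem x hx =>
    obtain ⟨M, hM, rfl⟩ := hx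
    intro c
    rw [mapMatrix_smul_map_algebraMap]
    exact L.smul_mem _ hM
  | zero => simp
  | add x y _ _ hx hy =>
    intro c
    rw [smul_add, map_add]
    exact L.add_mem (hx c) (hy c)
  | smul a x _ hx => intro c; simpa [smul_smul] using hx (c * a)

theorem exists_map_dual_ne_zero {A : Matrix m n K} (hA : A ≠ 0) :
    ∃ φ : Module.Dual F K, A.map φ ≠ 0 := by
  obtain ⟨i, j, hij⟩ : ∃ i j, A i j ≠ 0 := by
    by_contra! h
    exact hA (ext h)
  obtain ⟨φ, hφ⟩ : ∃ φ : Module.Dual F K, φ (A i j) ≠ 0 := by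
    by_contra! h
    exact hij ((Module.forall_dual_apply_eq_zero_iff F _).mp h)
  exact ⟨φ, fun h => hφ (congrFun (congrFun h i) j)⟩

end Matrix

/-- Rank descent: K = F_{2^r}, L an F₂-linear subspace of N×N
matrices over F₂. Any nonzero matrix in the K-span of (the image of) L inside
K^{N×N} of K-rank ≤ k yields a nonzero B ∈ L with F₂-rank ≤ r·k. -/
theorem stmt7 (N r k : ℕ) (hr : 0 < r)
    (L : Submodule (ZMod 2) (Matrix (Fin N) (Fin N) (ZMod 2)))
    (A : Matrix (Fin N) (Fin N) (GaloisField 2 r))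
    (hA : A ∈ Submodule.span (GaloisField 2 r)
      ((fun M : Matrix (Fin N) (Fin N) (ZMod 2) =>
          M.map (algebraMap (ZMod 2) (GaloisField 2 r))) '' (L : Set _)))
    (hA0 : A ≠ 0) (hrank : A.rank ≤ k) :
    ∃ B ∈ L, B ≠ 0 ∧ Matrix.rank B ≤ r * k := by
  obtain ⟨φ, hφ⟩ := Matrix.exists_map_dual_ne_zero (F := ZMod 2) hA0
  refine ⟨A.map φ, Matrix.map_dual_mem_of_mem_span_map_algebraMap L hA φ, hφ, ?_⟩
  calc (A.map φ).rank
      ≤ Module.finrank (ZMod 2) (GaloisField 2 r) * A.rank :=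
        Matrix.rank_map_le_finrank_mul_rank A φ
    _ ≤ r * k := by
        rw [GaloisField.finrank 2 hr.ne']
        exact Nat.mul_le_mul_left r hrank
end

section
/- Let p, q ∈ K^N where K = F_{2^r}, and let φ : K → F_2 be an F_2-linear map. Then the matrix obtained by applying φ entrywise to the rank-one matrix p qᵀ has rank at most r over F_2. -/
open Matrix Module

theorem Matrix.rank_of_apply₂_le_finrank {F V W m n : Type*} [Field F] [AddCommGroup V]
    [Module F V] [FiniteDimensional F V] [AddCommGroup W] [Module F W] [Fintype m] [Fintype n]
    (B : V →ₗ[F] W →ₗ[F] F) (x : m → V) (y : n → W) :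
    (of fun i j => B (x i) (y j)).rank ≤ finrank F V := by
  set b := finBasis F V
  have hfactor : (of fun i j => B (x i) (y j)) =
      (of fun i k => b.repr (x i) k) * of fun k j => B (b k) (y j) := by
    ext i j
    calc B (x i) (y j) = B (∑ k, b.repr (x i) k • b k) (y j) := by rw [b.sum_repr]
      _ = _ := by
        simp only [map_sum, map_smul, LinearMap.sum_apply, LinearMap.smul_apply, smul_eq_mul,
          mul_apply, of_apply]
  rw [hfactor]
  calc _ ≤ (of fun k j => B (b k) (y j)).rank := rank_mul_le_right _ _
    _ ≤ Fintype.card (Fin (finrank F V)) := rank_le_card_height _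
    _ = finrank F V := Fintype.card_fin _

/-- applying an F₂-linear map φ : F_{2^r} → F₂ entrywise to a
rank-one matrix p qᵀ over K = F_{2^r} gives a matrix of rank ≤ r over F₂. -/
theorem stmt8 (N r : ℕ) (hr : 0 < r) (p q : Fin N → GaloisField 2 r)
    (φ : GaloisField 2 r →ₗ[ZMod 2] ZMod 2) :
    ((Matrix.vecMulVec p q).map φ).rank ≤ r := by
  have h := rank_of_apply₂_le_finrank ((LinearMap.mul (ZMod 2) _).compr₂ φ) p q
  rwa [GaloisField.finrank 2 hr.ne'] at h
end

section
/- Let F be a field, let V be the collection of subsets of {1,…,n} of size at most d, and let y : (subsets of size ≤ 2d) → F. Let A be the matrix indexed by V×V with A_{S,T} = y_{S∪T}. Suppose R is a set of minimum cardinality with y_R ≠ 0, and |R| = s ≥ 2 with s ≤ 2d and ⌈s/2⌉ ≤ d. Then rank(A) ≥ C(s, ⌊s/2⌋), the central binomial coefficient of s. -/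
open Matrix

/-- Rank of an arbitrary submatrix is at most the rank of the matrix. -/
theorem rank_submatrix_le' {F : Type*} [Field F] {m n p q : Type*}
    [Fintype m] [Fintype n] [Fintype p] [Fintype q]
    [DecidableEq m] [DecidableEq n]
    (A : Matrix m n F) (f : p → m) (g : q → n) :
    (A.submatrix f g).rank ≤ A.rank := by
  have h : A.submatrix f g = ((1 : Matrix m m F).submatrix f id) * A *
      ((1 : Matrix n n F).submatrix id g) := by
    ext i j
    simp [Matrix.mul_apply, Matrix.one_apply, Finset.sum_ite_eq, Finset.sum_ite_eq']
  rw [h]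
  exact le_trans (Matrix.rank_mul_le_left _ _) (Matrix.rank_mul_le_right _ _)

/-- if R is a minimum-cardinality set with y_R ≠ 0, with
|R| = s ≥ 2, s ≤ 2d and ⌈s/2⌉ ≤ d, then the pseudo-moment matrix
A_{S,T} = y_{S∪T} (rows/columns: subsets of size ≤ d) has rank at least
C(s, ⌊s/2⌋). -/
theorem stmt9 (F : Type*) [Field F] (n d s : ℕ) (y : Finset (Fin n) → F)
    (R : Finset (Fin n)) (hR : y R ≠ 0)
    (hmin : ∀ Q : Finset (Fin n), Q.card < R.card → y Q = 0)
    (hs : R.card = s) (hs2 : 2 ≤ s) (hsd : s ≤ 2 * d) (hceil : (s + 1) / 2 ≤ d) :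
    Nat.choose s (s / 2) ≤
      Matrix.rank (Matrix.of (fun S T : {S : Finset (Fin n) // S.card ≤ d} =>
        y (S.1 ∪ T.1))) := by
  set A := Matrix.of (fun S T : {S : Finset (Fin n) // S.card ≤ d} => y (S.1 ∪ T.1)) with hA
  set ι := {S : Finset (Fin n) // S ∈ R.powersetCard (s / 2)} with hι
  have hmem : ∀ i : ι, i.1 ⊆ R ∧ i.1.card = s / 2 := fun i =>
    Finset.mem_powersetCard.mp i.2
  have hkd : s / 2 ≤ d := le_trans (by omega) hceil
  have hkd' : s - s / 2 ≤ d := by omega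
  set f : ι → {S : Finset (Fin n) // S.card ≤ d} :=
    fun i => ⟨i.1, by rw [(hmem i).2]; exact hkd⟩ with hf
  set g : ι → {S : Finset (Fin n) // S.card ≤ d} :=
    fun i => ⟨R \ i.1, by
      rw [Finset.card_sdiff_of_subset (hmem i).1, hs, (hmem i).2]; exact hkd'⟩ with hg
  have hsub : A.submatrix f g = Matrix.diagonal (fun _ : ι => y R) := by
    ext i j
    by_cases hij : i = j
    · subst hij
      simp only [Matrix.submatrix_apply, Matrix.diagonal_apply_eq, hA, hf, hg,
        Matrix.of_apply]
      rw [Finset.union_sdiff_of_subset (hmem i).1]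
    · rw [Matrix.diagonal_apply_ne _ hij]
      simp only [Matrix.submatrix_apply, hA, hf, hg, Matrix.of_apply]
      apply hmin
      rw [hs]
      have hsubR : i.1 ∪ (R \ j.1) ⊆ R :=
        Finset.union_subset (hmem i).1 (Finset.sdiff_subset)
      have hne : i.1 ∪ (R \ j.1) ≠ R := by
        intro h
        apply hij
        have hji : j.1 ⊆ i.1 := by
          intro x hx
          have hxR : x ∈ R := (hmem j).1 hx
          have : x ∈ i.1 ∪ (R \ j.1) := h.symm ▸ hxR
          rcases Finset.mem_union.mp this with h' | h'
          · exact h'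
          · exact absurd hx (Finset.mem_sdiff.mp h').2
        exact Subtype.ext (Finset.eq_of_subset_of_card_le hji
          (by rw [(hmem i).2, (hmem j).2])).symm
      have := Finset.card_lt_card (lt_of_le_of_ne hsubR hne)
      omega
  have hrank : (A.submatrix f g).rank = Fintype.card ι := by
    classical
    rw [hsub, Matrix.rank_diagonal]
    exact Fintype.card_congr (Equiv.subtypeUnivEquiv fun _ => hR)
  have hcard : Fintype.card ι = Nat.choose s (s / 2) := by
    have h1 : Fintype.card ι = (R.powersetCard (s / 2)).card := Fintype.card_coe _
    rw [h1, Finset.card_powersetCard, hs]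
  calc Nat.choose s (s / 2) = (A.submatrix f g).rank := by rw [hrank, hcard]
    _ ≤ A.rank := rank_submatrix_le' A f g
end

section
/- Let F be a field and y : (subsets of {1,…,n} of size ≤ 2d) → F a pseudo-moment vector with pseudo-moment matrices H_e(y) = (y_{S∪T})_{|S|,|T|≤e} for 0 ≤ e ≤ d, and ranks r_e = rank H_e(y). If H_d(y) is nonzero and rank H_d(y) ≤ d, then there exists e ∈ {0,…,d−1} with r_e = r_{e+1} > 0. -/
open Matrix Finset

/-- Rank of an arbitrary submatrix is at most the rank of the matrix. -/
lemma aux_rank_submatrix_le {K : Type*} [Field K] {m₁ n₁ m₂ n₂ : Type*}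
    [Fintype m₁] [Fintype n₁] [Fintype m₂] [Fintype n₂] [DecidableEq m₂] [DecidableEq n₂]
    (A : Matrix m₂ n₂ K) (f : m₁ → m₂) (g : n₁ → n₂) :
    (A.submatrix f g).rank ≤ A.rank := by
  have h : A.submatrix f g =
      ((1 : Matrix m₂ m₂ K).submatrix f _root_.id) * A *
        ((1 : Matrix n₂ n₂ K).submatrix _root_.id g) := by
    ext i j
    simp [Matrix.mul_apply, Matrix.one_apply, Finset.sum_ite_eq, Finset.sum_ite_eq',
      ite_mul, mul_ite]
  rw [h]
  exact le_trans (Matrix.rank_mul_le_left _ _) (Matrix.rank_mul_le_right _ _)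

/-- A matrix containing an `N × N` triangular pattern with nonzero diagonal has rank ≥ N. -/
lemma aux_rank_ge_triangular {K : Type*} [Field K] {ι ι' : Type*}
    [Fintype ι] [Fintype ι'] [DecidableEq ι] [DecidableEq ι']
    (M : Matrix ι ι' K) (N : ℕ) (r : Fin N → ι) (c : Fin N → ι')
    (hdiag : ∀ i, M (r i) (c i) ≠ 0)
    (hzero : ∀ i j, i < j → M (r i) (c j) = 0) :
    N ≤ M.rank := by
  have hle := aux_rank_submatrix_le M r c
  have hdet : (M.submatrix r c).det ≠ 0 := by
    rw [Matrix.det_of_lowerTriangular (M.submatrix r c)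
      (fun i j h => hzero i j (by simpa using h))]
    exact Finset.prod_ne_zero_iff.mpr fun i _ => hdiag i
  have hrank : (M.submatrix r c).rank = N := by
    rw [Matrix.rank_of_isUnit _ ((Matrix.isUnit_iff_isUnit_det _).mpr (Ne.isUnit hdet))]
    simp
  omega

/-- Nonzero flat level: if the degree-d pseudo-moment matrix
H_d(y) is nonzero of rank ≤ d, then some level e < d satisfies
rank H_e(y) = rank H_{e+1}(y) > 0. Here H_e(y) is indexed by subsets of
{1,…,n} of size ≤ e with entry y_{S∪T}. -/
theorem stmt11 (K : Type*) [Field K] (n d : ℕ) (y : Finset (Fin n) → K)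
    (H : ∀ e : ℕ, Matrix {S : Finset (Fin n) // S.card ≤ e}
          {S : Finset (Fin n) // S.card ≤ e} K)
    (hH : ∀ e (S T : {S : Finset (Fin n) // S.card ≤ e}), H e S T = y (S.1 ∪ T.1))
    (hne : H d ≠ 0) (hrk : (H d).rank ≤ d) :
    ∃ e < d, (H e).rank = (H (e + 1)).rank ∧ 0 < (H e).rank := by
  classical
  -- monotonicity of ranks
  have mono : ∀ e : ℕ, (H e).rank ≤ (H (e + 1)).rank := by
    intro e
    have hsub : H e = (H (e + 1)).submatrix
        (fun S : {S : Finset (Fin n) // S.card ≤ e} => (⟨S.1, S.2.trans (Nat.le_succ e)⟩ :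
          {S : Finset (Fin n) // S.card ≤ e + 1}))
        (fun S : {S : Finset (Fin n) // S.card ≤ e} => ⟨S.1, S.2.trans (Nat.le_succ e)⟩) := by
      ext P Q
      simp [hH, Matrix.submatrix_apply]
    rw [hsub]
    exact aux_rank_submatrix_le _ _ _
  -- a nonzero entry of H d
  have hex : ∃ P Q : {S : Finset (Fin n) // S.card ≤ d}, H d P Q ≠ 0 := by
    by_contra h
    push_neg at h
    exact hne (by ext P Q; simpa using h P Q)
  obtain ⟨P, Q, hPQ⟩ := hex
  have hyPQ : y (P.1 ∪ Q.1) ≠ 0 := by rwa [hH] at hPQ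
  -- minimal-cardinality set with nonzero y
  set Ω : Finset (Finset (Fin n)) := Finset.univ.filter (fun T => y T ≠ 0) with hΩ
  have hΩne : Ω.Nonempty := ⟨P.1 ∪ Q.1, by simp [hΩ, hyPQ]⟩
  obtain ⟨S, hSmem, hSmin⟩ := Finset.exists_min_image Ω Finset.card hΩne
  have hyS : y S ≠ 0 := by simpa [hΩ] using hSmem
  have hmin : ∀ T : Finset (Fin n), T.card < S.card → y T = 0 := by
    intro T hT
    by_contra hyT
    exact absurd (hSmin T (by simp [hΩ, hyT])) (by omega)
  set m := S.card with hm
  have hm2d : m ≤ 2 * d := by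
    have h1 : m ≤ (P.1 ∪ Q.1).card := hSmin _ (by simp [hΩ, hyPQ])
    have h2 : (P.1 ∪ Q.1).card ≤ P.1.card + Q.1.card := Finset.card_union_le _ _
    have := P.2; have := Q.2; omega
  set s := (m + 1) / 2 with hs
  set b := m / 2 with hb
  have hsb : s + b = m := by omega
  have hbs : b ≤ s := by omega
  have hsd : s ≤ d := by omega
  -- the enumeration of S
  set f := S.orderEmbOfFin (rfl : S.card = m) with hf
  -- windows / prefixes
  set l : Fin (s + 1) → ℕ := fun i => if b = 0 then 0 else (i : ℕ) with hl
  set u : Fin (s + 1) → ℕ := fun i => if b = 0 then (i : ℕ) else (i : ℕ) + b with hu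
  have hum : ∀ i : Fin (s + 1), u i ≤ m := by
    intro i; have := i.2; simp only [hu]; split <;> omega
  have hlu : ∀ i : Fin (s + 1), u i - l i ≤ s ∧ b ≤ u i - l i := by
    intro i; have := i.2; simp only [hu, hl]; split <;> omega
  set W : Fin (s + 1) → Finset (Fin n) := fun i =>
    ((Finset.Ico (l i) (u i)).attachFin
      (fun k hk => by rw [Finset.mem_Ico] at hk; exact lt_of_lt_of_le hk.2 (hum i))).image f
    with hW
  have hmemW : ∀ (i : Fin (s + 1)) (x : Fin n),
      x ∈ W i ↔ ∃ k : Fin m, l i ≤ (k : ℕ) ∧ (k : ℕ) < u i ∧ f k = x := by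
    intro i x
    simp only [hW, Finset.mem_image, Finset.mem_attachFin, Finset.mem_Ico]
    constructor
    · rintro ⟨k, ⟨h1, h2⟩, h3⟩; exact ⟨k, h1, h2, h3⟩
    · rintro ⟨k, h1, h2, h3⟩; exact ⟨k, ⟨h1, h2⟩, h3⟩
  have hWS : ∀ i : Fin (s + 1), W i ⊆ S := by
    intro i x hx
    rw [hmemW] at hx
    obtain ⟨k, -, -, rfl⟩ := hx
    exact Finset.orderEmbOfFin_mem S rfl k
  have hWcard : ∀ i : Fin (s + 1), (W i).card = u i - l i := by
    intro i
    rw [hW]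
    rw [Finset.card_image_of_injective _ f.injective,
      Finset.card_attachFin, Nat.card_Ico]
  have hWnotsub : ∀ i j : Fin (s + 1), i < j → ¬ W j ⊆ W i := by
    intro i j hij hsub
    have hij' : (i : ℕ) < (j : ℕ) := hij
    have hluj : l j < u j := by simp only [hu, hl]; split <;> omega
    have hk : u j - 1 < m := by have := hum j; omega
    have hxj : f ⟨u j - 1, hk⟩ ∈ W j := by
      rw [hmemW]
      exact ⟨⟨u j - 1, hk⟩, by show l j ≤ u j - 1; omega, by show u j - 1 < u j; omega, rfl⟩
    have hxi := hsub hxj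
    rw [hmemW] at hxi
    obtain ⟨k, hk1, hk2, hk3⟩ := hxi
    have : (k : ℕ) = u j - 1 := by
      have h := f.injective hk3
      rw [h]
    have hui : u i < u j := by simp only [hu]; split <;> omega
    omega
  -- row/column indices in H s
  have hrowle : ∀ i : Fin (s + 1), (W i).card ≤ s := fun i => by
    rw [hWcard]; exact (hlu i).1
  have hcolle : ∀ j : Fin (s + 1), (S \ W j).card ≤ s := by
    intro j
    rw [Finset.card_sdiff_of_subset (hWS j), hWcard]
    have := (hlu j).2; omega
  set row : Fin (s + 1) → {T : Finset (Fin n) // T.card ≤ s} := fun i => ⟨W i, hrowle i⟩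
  set col : Fin (s + 1) → {T : Finset (Fin n) // T.card ≤ s} := fun j => ⟨S \ W j, hcolle j⟩
  have key : s + 1 ≤ (H s).rank := by
    apply aux_rank_ge_triangular (H s) (s + 1) row col
    · intro i
      rw [hH]
      simpa [row, col, Finset.union_sdiff_of_subset (hWS i)] using hyS
    · intro i j hij
      rw [hH]
      apply hmin
      have hsub : W i ∪ (S \ W j) ⊆ S :=
        Finset.union_subset (hWS i) (Finset.sdiff_subset)
      apply Finset.card_lt_card
      rw [Finset.ssubset_iff_of_subset hsub]
      obtain ⟨x, hxj, hxi⟩ := Finset.not_subset.mp (hWnotsub i j hij)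
      exact ⟨x, hWS j hxj, by simp [Finset.mem_union, Finset.mem_sdiff, hxi, hxj]⟩
  -- counting argument
  by_contra hcon
  push_neg at hcon
  have hc : ∀ e, e < d → (H e).rank = (H (e + 1)).rank → (H e).rank = 0 := by
    intro e he heq
    have := hcon e he heq
    omega
  have claim : ∀ k, s + k ≤ d → s + 1 + k ≤ (H (s + k)).rank := by
    intro k
    induction k with
    | zero => intro _; simpa using key
    | succ k ih =>
      intro hk
      have h1 := ih (by omega)
      have h2 := mono (s + k)
      rcases eq_or_lt_of_le h2 with heq | hlt
      · have := hc (s + k) (by omega) heq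
        omega
      · have h3 : s + (k + 1) = s + k + 1 := by omega
        rw [h3]
        omega
  have := claim (d - s) (by omega)
  have h2 : s + (d - s) = d := by omega
  rw [h2] at this
  omega
end

section
/- Let F be a field and y a pseudo-moment vector on subsets of size at most 2d. Let S be a set of minimum cardinality h with y_S ≠ 0 and set s = ⌈h/2⌉. Then rank H_s(y) ≥ s + 1. -/
open Matrix in
lemma rank_submatrix_le_aux {R : Type*} [Field R] {m l o : Type*} [Fintype m] [Fintype l]
    [Fintype o] [DecidableEq m] (A : Matrix m m R) (f : l → m) (g : o → m) :
    (A.submatrix f g).rank ≤ A.rank := by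
  have hP : A.submatrix f g =
      (Matrix.of fun (i : l) (a : m) => if a = f i then (1 : R) else 0) * A *
        (Matrix.of fun (b : m) (j : o) => if b = g j then (1 : R) else 0) := by
    ext i j
    simp [Matrix.mul_apply, ite_mul, mul_ite, Finset.sum_ite_eq, Finset.sum_ite_eq']
  rw [hP]
  exact (Matrix.rank_mul_le_left _ _).trans (Matrix.rank_mul_le_right _ _)

/-- if S is a minimum-cardinality set with y_S ≠ 0, |S| = h ≤ 2d,
and s = ⌈h/2⌉, then the level-s pseudo-moment matrix H_s(y) has rank ≥ s + 1. -/
theorem stmt12 (K : Type*) [Field K] (n d h s : ℕ) (y : Finset (Fin n) → K)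
    (S : Finset (Fin n)) (hS : y S ≠ 0)
    (hmin : ∀ Q : Finset (Fin n), Q.card < S.card → y Q = 0)
    (hh : S.card = h) (hhd : h ≤ 2 * d) (hs : s = (h + 1) / 2) :
    s + 1 ≤ Matrix.rank (Matrix.of
      (fun A B : {A : Finset (Fin n) // A.card ≤ s} => y (A.1 ∪ B.1))) := by
  classical
  set M : Matrix {A : Finset (Fin n) // A.card ≤ s} {A : Finset (Fin n) // A.card ≤ s} K :=
    Matrix.of (fun A B : {A : Finset (Fin n) // A.card ≤ s} => y (A.1 ∪ B.1)) with hM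
  by_cases h1 : h = 1
  · -- special case h = 1
    subst h1
    have hs1 : s = 1 := by omega
    subst hs1
    have hempty : y ∅ = 0 := by
      apply hmin; rw [hh]; simp
    set f : Fin 2 → {A : Finset (Fin n) // A.card ≤ 1} :=
      ![⟨∅, by simp⟩, ⟨S, by rw [hh]⟩] with hf
    have hsub : M.submatrix f f = !![(0 : K), y S; y S, y S] := by
      ext i j
      fin_cases i <;> fin_cases j <;>
        simp [hM, hf, hempty]
    have hdet : (M.submatrix f f).det ≠ 0 := by
      rw [hsub, Matrix.det_fin_two_of]
      intro hcon
      apply hS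
      have : y S * y S = 0 := by linear_combination -hcon
      exact (mul_self_eq_zero).mp this
    have hrank : (M.submatrix f f).rank = 2 := by
      rw [Matrix.rank_of_isUnit _ ((Matrix.isUnit_iff_isUnit_det _).mpr (isUnit_iff_ne_zero.mpr hdet))]
      simp
    calc (2 : ℕ) = (M.submatrix f f).rank := hrank.symm
      _ ≤ M.rank := rank_submatrix_le_aux _ _ _
  · -- generic case: h = 0 or h ≥ 2
    set t := h / 2 with ht
    have hts : t + s = h := by omega
    have htles : t ≤ s := by omega
    have hcb : s + 1 ≤ Nat.choose h t := by
      rcases Nat.lt_or_ge h 2 with h2 | h2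
      · have h0 : h = 0 := by omega
        subst h0
        have : s = 0 := by omega
        simp [this, ht]
      · calc s + 1 ≤ h := by omega
          _ = Nat.choose h 1 := (Nat.choose_one_right h).symm
          _ ≤ Nat.choose h (h / 2) := Nat.choose_le_middle 1 h
    have hcard : s + 1 ≤ (S.powersetCard t).card := by
      rw [Finset.card_powersetCard, hh]; exact hcb
    obtain ⟨T, hT, hTcard⟩ := Finset.exists_subset_card_eq hcard
    set e : Fin (s + 1) ≃ T := (T.equivFin.trans (finCongr hTcard)).symm with he
    set A : Fin (s + 1) → Finset (Fin n) := fun i => ((e i : T) : Finset (Fin n)) with hA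
    have hAmem : ∀ i, A i ⊆ S ∧ (A i).card = t := by
      intro i
      have : A i ∈ S.powersetCard t := hT (e i).2
      exact Finset.mem_powersetCard.mp this
    have hAinj : Function.Injective A := by
      intro i j hij
      exact e.injective (Subtype.ext hij)
    set f : Fin (s + 1) → {A : Finset (Fin n) // A.card ≤ s} :=
      fun i => ⟨A i, by rw [(hAmem i).2]; exact htles⟩ with hf
    set g : Fin (s + 1) → {A : Finset (Fin n) // A.card ≤ s} :=
      fun i => ⟨S \ A i, by rw [Finset.card_sdiff_of_subset (hAmem i).1, hh, (hAmem i).2]; omega⟩ with hg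
    have hsub : M.submatrix f g = Matrix.diagonal (fun _ : Fin (s + 1) => y S) := by
      ext i j
      rw [Matrix.diagonal_apply]
      by_cases hij : i = j
      · subst hij
        simp only [if_pos rfl]
        have : A i ∪ (S \ A i) = S := Finset.union_sdiff_of_subset (hAmem i).1
        simp [hM, hf, hg, Matrix.submatrix_apply, this]
      · rw [if_neg hij]
        have hne : A i ≠ A j := fun hcon => hij (hAinj hcon)
        apply hmin
        apply Finset.card_lt_card
        constructor
        · intro x hx
          rcases Finset.mem_union.mp hx with hx' | hx'
          · exact (hAmem i).1 hx'
          · exact (Finset.mem_sdiff.mp hx').1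
        · intro hcon
          have hsubAj : A j ⊆ A i := by
            intro x hxAj
            have hxS : x ∈ S := (hAmem j).1 hxAj
            have hxU : x ∈ A i ∪ (S \ A j) := hcon hxS
            rcases Finset.mem_union.mp hxU with hx' | hx'
            · exact hx'
            · exact absurd hxAj (Finset.mem_sdiff.mp hx').2
          exact hne ((Finset.eq_of_subset_of_card_le hsubAj
            (by rw [(hAmem i).2, (hAmem j).2])).symm)
    have hdet : (M.submatrix f g).det ≠ 0 := by
      rw [hsub, Matrix.det_diagonal, Finset.prod_const]
      exact pow_ne_zero _ hS
    have hrank : (M.submatrix f g).rank = s + 1 := by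
      rw [Matrix.rank_of_isUnit _ ((Matrix.isUnit_iff_isUnit_det _).mpr
        (isUnit_iff_ne_zero.mpr hdet))]
      simp
    calc s + 1 = (M.submatrix f g).rank := hrank.symm
      _ ≤ M.rank := rank_submatrix_le_aux _ _ _
end
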